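/- Assume min η = (3/4)·max η. Then there exist constants C > 0 and s₀ > 0 (depending only on η and r) such that for all λ ≥ 1, all s ≥ s₀(T + e^{2λM}), and every ψ ∈ C^∞([0,L]×[0,T]), setting w := e^{−sα}ψ and P_e w := w_xx + (sα_t + s²α_x²)w, one has: s^{−1} ∫₀^T∫₀^L ξ^{−1} w_xx² dx dt ≤ C ( s^{−1} ∫₀^T∫₀^L ξ^{−1} |P_e w|² dx dt + s³λ⁴ ∫₀^T∫₀^L ξ³ w² dx dt ). -/

import Mathlib

open MeasureTheory Real Set Filter Function

noncomputable def pdX (f : ℝ → ℝ → ℝ) (x t : ℝ) : ℝ := deriv (fun y => f y t) x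

noncomputable def pdT (f : ℝ → ℝ → ℝ) (x t : ℝ) : ℝ := deriv (fun u => f x u) t

noncomputable def wXi (r : ℝ → ℝ) (η : ℝ → ℝ → ℝ) (lam x t : ℝ) : ℝ :=
  r t * Real.exp (lam * η x t)

noncomputable def wAl (r : ℝ → ℝ) (η : ℝ → ℝ → ℝ) (M lam x t : ℝ) : ℝ :=
  r t * (Real.exp (2 * lam * M) - Real.exp (lam * η x t))

def stSet (T : ℝ) (ω : ℝ → Set ℝ) : Set (ℝ × ℝ) :=
  {p | p.2 ∈ Set.Icc 0 T ∧ p.1 ∈ ω p.2}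

theorem aux_pow4 (y : ℝ) (hy : 0 ≤ y) : y^4 ≤ 256 * Real.exp y := by
  have h1 : y/4 + 1 ≤ Real.exp (y/4) := Real.add_one_le_exp _
  have h2 : (y/4)^4 ≤ (Real.exp (y/4))^4 := by
    apply pow_le_pow_left₀ (by positivity); linarith
  have h3 : (Real.exp (y/4))^4 = Real.exp y := by
    rw [← Real.exp_nat_mul]; push_cast; ring_nf
  nlinarith [h2, h3]

theorem aux_polyexp {ε : ℝ} (hε : 0 < ε) :
    ∃ Cp : ℝ, 0 ≤ Cp ∧ ∀ ρ : ℝ, 0 ≤ ρ → ρ^4 * Real.exp (-(ε*ρ)) ≤ Cp := by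
  refine ⟨256/ε^4, by positivity, fun ρ hρ => ?_⟩
  have h : ρ^4 ≤ 256/ε^4 * Real.exp (ε*ρ) := by
    rw [div_mul_eq_mul_div, le_div_iff₀ (by positivity)]
    calc ρ^4 * ε^4 = (ε*ρ)^4 := by ring
      _ ≤ 256 * Real.exp (ε*ρ) := aux_pow4 _ (by positivity)
  calc ρ^4 * Real.exp (-(ε*ρ)) ≤ (256/ε^4 * Real.exp (ε*ρ)) * Real.exp (-(ε*ρ)) := by
        apply mul_le_mul_of_nonneg_right h (Real.exp_nonneg _)
    _ = 256/ε^4 := by rw [mul_assoc, ← Real.exp_add]; simp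

theorem aux_sliceX {g : ℝ × ℝ → ℝ} {x t : ℝ} (hg : DifferentiableAt ℝ g (x, t)) :
    HasDerivAt (fun y => g (y, t)) (fderiv ℝ g (x, t) (1, 0)) x := by
  have h1 : HasDerivAt (fun y : ℝ => ((y, t) : ℝ × ℝ)) (1, 0) x :=
    (hasDerivAt_id x).prodMk (hasDerivAt_const x t)
  have := hg.hasFDerivAt.comp_hasDerivAt x h1
  exact this

theorem aux_sliceT {g : ℝ × ℝ → ℝ} {x t : ℝ} (hg : DifferentiableAt ℝ g (x, t)) :
    HasDerivAt (fun u => g (x, u)) (fderiv ℝ g (x, t) (0, 1)) t := by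
  have h1 : HasDerivAt (fun u : ℝ => ((x, u) : ℝ × ℝ)) (0, 1) t :=
    (hasDerivAt_const t x).prodMk (hasDerivAt_id t)
  have := hg.hasFDerivAt.comp_hasDerivAt t h1
  exact this

theorem aux_one_le_mul {a b : ℝ} (ha : 1 ≤ a) (hb : 1 ≤ b) : 1 ≤ a * b := by nlinarith

theorem aux_sq_split (a b : ℝ) : (a - b)^2 ≤ 2*a^2 + 2*b^2 := by nlinarith [sq_nonneg (a+b)]

theorem aux_Qarith {C_r Kθ s lam ρ e E2 : ℝ} (hC_r1 : 1 ≤ C_r) (hKθ1 : 1 ≤ Kθ)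
    (hs1 : 1 ≤ s) (hlam : 1 ≤ lam) (hρ : 1 ≤ ρ) (he : 1 ≤ e)
    (hEes : E2 - e ≤ s) (hEe : 0 ≤ E2 - e) :
    s * ((C_r * ρ^2) * (E2 - e) + ρ * (e * (lam * Kθ)))
      + s^2 * (ρ * (e * (lam * Kθ)))^2
    ≤ (C_r + Kθ + Kθ^2) * (s^2 * lam^2 * (ρ*e)^2) := by
  have hs0 : (0:ℝ) ≤ s := by linarith
  have hρ0 : (0:ℝ) ≤ ρ := by linarith
  have he0 : (0:ℝ) ≤ e := by linarith
  have hlam0 : (0:ℝ) ≤ lam := by linarith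
  have hC_r0 : (0:ℝ) ≤ C_r := by linarith
  have hKθ0 : (0:ℝ) ≤ Kθ := by linarith
  have hone : (1:ℝ) ≤ (lam*e)^2 := one_le_pow₀ (aux_one_le_mul hlam he)
  have hone2 : (1:ℝ) ≤ s*ρ*e*lam :=
    aux_one_le_mul (aux_one_le_mul (aux_one_le_mul hs1 hρ) he) hlam
  have hint1 : C_r * (s*ρ^2) * (E2 - e) ≤ C_r * (s*ρ^2) * s :=
    mul_le_mul_of_nonneg_left hEes (by positivity)
  have hint2 : C_r * (s*ρ^2) * s ≤ C_r * (s*ρ^2) * s * (lam*e)^2 :=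
    le_mul_of_one_le_right (by positivity) hone
  have hint3 : Kθ*(s*ρ*e*lam) ≤ Kθ*(s*ρ*e*lam)*(s*ρ*e*lam) :=
    le_mul_of_one_le_right (by positivity) hone2
  nlinarith [hint1, hint2, hint3]

theorem aux_invle {a : ℝ} (h : 1 ≤ a) : a⁻¹ ≤ 1 := by
  rw [← one_div, div_le_one (by linarith)]; linarith

theorem aux_poly2 {ρ cP cR Kp : ℝ} (hρ : 1 ≤ ρ) (hcP : 0 ≤ cP) (hcR : 0 ≤ cR) (hKp : 0 ≤ Kp) :
    (ρ*cP)*((ρ*cP)*Kp + Kp) + ((ρ*cR)*Kp + ((ρ*cP)*Kp + Kp))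
      ≤ (cP*(cP*Kp + Kp) + (cR*Kp + (cP*Kp + Kp))) * ρ^2 := by
  have h1 : ρ ≤ ρ^2 := by nlinarith
  have h2 : (1:ℝ) ≤ ρ^2 := by nlinarith
  nlinarith [mul_nonneg (sub_nonneg.mpr h1) (mul_nonneg hcP hKp),
    mul_nonneg (sub_nonneg.mpr h1) (mul_nonneg hcR hKp),
    mul_nonneg (sub_nonneg.mpr h2) hKp]

theorem aux_final {X Y c : ℝ} (hX : 0 ≤ X) (hY : 0 ≤ Y) :
    2*X + 2*c^2*Y ≤ (2+2*c^2)*(X+Y) := by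
  nlinarith [mul_nonneg (sq_nonneg c) hX, mul_nonneg (sq_nonneg c) hY]

set_option maxHeartbeats 1000000 in
theorem stmt17 (L T τ M : ℝ) (r : ℝ → ℝ) (η : ℝ → ℝ → ℝ)
    (hL : 0 < L) (hT : 0 < T) (hτ : τ ∈ Set.Ioo 0 (min 1 (T/2)))
    (hr_smooth : ContDiffOn ℝ (⊤ : ℕ∞) r (Set.Ioo 0 T))
    (hr_pos : ∀ t ∈ Set.Ioo (0:ℝ) T, 0 < r t)
    (hr_sym : ∀ t ∈ Set.Ioo (0:ℝ) T, r t = r (T - t))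
    (hr_inv : ∀ t ∈ Set.Ioc (0:ℝ) (τ/2), r t = 1 / t)
    (hr_anti : StrictAntiOn r (Set.Ioo (τ/2) τ))
    (hr_one : ∀ t ∈ Set.Icc τ (T/2), r t = 1)
    (hη : ContDiff ℝ (⊤ : ℕ∞) (Function.uncurry η))
    (hM : IsGreatest (Set.image2 η (Set.Icc 0 L) (Set.Icc 0 T)) M)
    (hMpos : 0 < M)
    (hmin : IsLeast (Set.image2 η (Set.Icc 0 L) (Set.Icc 0 T)) (3 / 4 * M))
 :
    ∃ C > (0:ℝ), ∃ s₀ > (0:ℝ), ∀ lam ≥ (1:ℝ), ∀ s ≥ s₀ * (T + Real.exp (2 * lam * M)),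
      ∀ ψ w Pe : ℝ → ℝ → ℝ, ContDiff ℝ (⊤ : ℕ∞) (Function.uncurry ψ) →
        w = (fun y u => Real.exp (-(s * wAl r η M lam y u)) * ψ y u) →
        Pe = (fun y u => pdX (pdX w) y u + (s * pdT (wAl r η M lam) y u + s^2 * (pdX (wAl r η M lam) y u)^2) * w y u) →
        s⁻¹ * (∫ t in Set.Ioo (0:ℝ) T, ∫ x in Set.Ioo (0:ℝ) L, (wXi r η lam x t)⁻¹ * (pdX (pdX w) x t)^2)
        ≤ C * (s⁻¹ * (∫ t in Set.Ioo (0:ℝ) T, ∫ x in Set.Ioo (0:ℝ) L, (wXi r η lam x t)⁻¹ * (Pe x t)^2)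
          + s^3 * lam^4 * (∫ t in Set.Ioo (0:ℝ) T, ∫ x in Set.Ioo (0:ℝ) L, (wXi r η lam x t)^3 * (w x t)^2)) := by
  -- basic facts about τ
  have hτ0 : 0 < τ := hτ.1
  have hτ1 : τ < 1 := lt_of_lt_of_le hτ.2 (min_le_left _ _)
  have hτT2 : τ < T/2 := lt_of_lt_of_le hτ.2 (min_le_right _ _)
  have hτT : τ < T := by linarith
  -- r ≥ 1 on (0,T)
  have hr1 : ∀ t ∈ Set.Ioo (0:ℝ) T, 1 ≤ r t := by
    have key : ∀ t, 0 < t → t ≤ T/2 → 1 ≤ r t := by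
      intro t ht0 htT2
      rcases le_or_gt t (τ/2) with h1 | h1
      · rw [hr_inv t ⟨ht0, h1⟩, le_div_iff₀ ht0]; linarith
      · rcases lt_or_ge t τ with h2 | h2
        · have hrτ : r τ = 1 := hr_one τ ⟨le_refl τ, le_of_lt hτT2⟩
          have hcw : ContinuousWithinAt r (Set.Ioo t τ) τ := by
            apply (hr_smooth.continuousOn.continuousWithinAt (x := τ) ⟨hτ0, hτT⟩).mono
            intro u hu; exact ⟨by linarith [hu.1], by linarith [hu.2]⟩
          have hne : (nhdsWithin τ (Set.Ioo t τ)).NeBot := by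
            rw [← mem_closure_iff_nhdsWithin_neBot, closure_Ioo (ne_of_lt h2)]
            exact ⟨le_of_lt h2, le_refl τ⟩
          have htend : Tendsto r (nhdsWithin τ (Set.Ioo t τ)) (nhds 1) := by
            rw [← hrτ]; exact hcw
          refine le_of_tendsto htend ?_
          filter_upwards [self_mem_nhdsWithin] with u hu
          exact le_of_lt (hr_anti ⟨h1, h2⟩ ⟨lt_trans h1 hu.1, hu.2⟩ hu.1)
        · exact (hr_one t ⟨h2, htT2⟩).ge
    intro t ht
    rcases le_or_gt t (T/2) with h | h
    · exact key t ht.1 h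
    · rw [hr_sym t ht]; exact key (T-t) (by linarith [ht.2]) (by linarith)
  -- bound for |deriv r|
  have hIccIoo : Set.Icc (τ/2) (T - τ/2) ⊆ Set.Ioo 0 T := by
    intro u hu; exact ⟨by linarith [hu.1], by linarith [hu.2]⟩
  obtain ⟨Cm, hCm⟩ := isCompact_Icc.exists_bound_of_continuousOn
    ((hr_smooth.continuousOn_deriv_of_isOpen isOpen_Ioo (by simp)).mono hIccIoo)
  set C_r : ℝ := max 1 Cm with hC_rdef
  have hC_r1 : 1 ≤ C_r := le_max_left _ _
  have hrd : ∀ t ∈ Set.Ioo (0:ℝ) T, |deriv r t| ≤ C_r * (r t)^2 := by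
    intro t ht
    rcases lt_or_ge t (τ/2) with h1 | h1
    · have hev : r =ᶠ[nhds t] fun u => u⁻¹ := by
        filter_upwards [Ioo_mem_nhds ht.1 h1] with u hu
        rw [hr_inv u ⟨hu.1, le_of_lt hu.2⟩, one_div]
      rw [hev.deriv_eq, deriv_inv, hr_inv t ⟨ht.1, le_of_lt h1⟩]
      rw [abs_neg, abs_of_nonneg (by positivity)]
      have h2 : (1/t)^2 = (t^2)⁻¹ := by
        rw [one_div, inv_pow]
      rw [h2]
      nlinarith [inv_nonneg.mpr (sq_nonneg t)]
    rcases le_or_gt t (T - τ/2) with h2 | h2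
    · have := hCm t ⟨h1, h2⟩
      rw [Real.norm_eq_abs] at this
      have h3 : 1 ≤ (r t)^2 := by nlinarith [hr1 t ht]
      calc |deriv r t| ≤ Cm := this
        _ ≤ C_r := le_max_right _ _
        _ ≤ C_r * (r t)^2 := le_mul_of_one_le_right (by linarith) h3
    · have hev : r =ᶠ[nhds t] fun u => (T - u)⁻¹ := by
        filter_upwards [Ioo_mem_nhds h2 ht.2] with u hu
        rw [hr_sym u ⟨by nlinarith [hu.1], hu.2⟩,
          hr_inv (T-u) ⟨by linarith [hu.2], by linarith [hu.1]⟩, one_div]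
      have hd : HasDerivAt (fun u => (T - u)⁻¹) (-(-1) / (T-t)^2) t :=
        ((hasDerivAt_id t).const_sub T).inv (sub_ne_zero.mpr (ne_of_gt ht.2))
      rw [hev.deriv_eq, hd.deriv]
      have hrt : r t = (T - t)⁻¹ := by
        rw [hr_sym t ht, hr_inv (T-t) ⟨by linarith [ht.2], by linarith [ht.1]⟩, one_div]
      rw [hrt, abs_of_nonneg (by positivity)]
      have hTt : (0:ℝ) < T - t := by linarith [ht.2]
      rw [div_eq_mul_inv, ← inv_pow]
      nlinarith [sq_nonneg ((T-t)⁻¹), inv_nonneg.mpr (le_of_lt hTt)]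
  -- derivatives of η
  set θ1 : ℝ × ℝ → ℝ := fun p => fderiv ℝ (Function.uncurry η) p (1, 0) with hθ1def
  set θt : ℝ × ℝ → ℝ := fun p => fderiv ℝ (Function.uncurry η) p (0, 1) with hθtdef
  have hθ1s : ContDiff ℝ (⊤ : ℕ∞) θ1 := (hη.fderiv_right (by simp)).clm_apply contDiff_const
  have hθts : ContDiff ℝ (⊤ : ℕ∞) θt := (hη.fderiv_right (by simp)).clm_apply contDiff_const
  set θ2 : ℝ × ℝ → ℝ := fun p => fderiv ℝ θ1 p (1, 0) with hθ2def
  have hθ2s : ContDiff ℝ (⊤ : ℕ∞) θ2 := (hθ1s.fderiv_right (by simp)).clm_apply contDiff_const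
  -- compact bounds
  have hQcomp : IsCompact (Set.Icc (0:ℝ) L ×ˢ Set.Icc (0:ℝ) T) := isCompact_Icc.prod isCompact_Icc
  obtain ⟨K1, hK1⟩ := hQcomp.exists_bound_of_continuousOn hθ1s.continuous.continuousOn
  obtain ⟨K2, hK2⟩ := hQcomp.exists_bound_of_continuousOn hθts.continuous.continuousOn
  obtain ⟨K3, hK3⟩ := hQcomp.exists_bound_of_continuousOn hθ2s.continuous.continuousOn
  set Kθ : ℝ := max 1 (max K1 (max K2 K3)) with hKθdef
  have hKθ1 : 1 ≤ Kθ := le_max_left _ _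
  have hbθ1 : ∀ x ∈ Set.Icc (0:ℝ) L, ∀ t ∈ Set.Icc (0:ℝ) T, |θ1 (x,t)| ≤ Kθ := by
    intro x hx t ht
    calc |θ1 (x,t)| ≤ K1 := by have := hK1 (x,t) ⟨hx, ht⟩; rwa [Real.norm_eq_abs] at this
      _ ≤ Kθ := le_trans (le_max_left _ _) (le_max_right _ _)
  have hbθt : ∀ x ∈ Set.Icc (0:ℝ) L, ∀ t ∈ Set.Icc (0:ℝ) T, |θt (x,t)| ≤ Kθ := by
    intro x hx t ht
    calc |θt (x,t)| ≤ K2 := by have := hK2 (x,t) ⟨hx, ht⟩; rwa [Real.norm_eq_abs] at this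
      _ ≤ Kθ := le_trans (le_trans (le_max_left _ _) (le_max_right _ _)) (le_max_right _ _)
  have hbθ2 : ∀ x ∈ Set.Icc (0:ℝ) L, ∀ t ∈ Set.Icc (0:ℝ) T, |θ2 (x,t)| ≤ Kθ := by
    intro x hx t ht
    calc |θ2 (x,t)| ≤ K3 := by have := hK3 (x,t) ⟨hx, ht⟩; rwa [Real.norm_eq_abs] at this
      _ ≤ Kθ := le_trans (le_trans (le_max_right _ _) (le_max_right _ _)) (le_max_right _ _)
  -- the constants
  set C₁ : ℝ := C_r + Kθ + Kθ^2 with hC₁def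
  have hC₁pos : 0 < C₁ := by nlinarith
  refine ⟨2 + 2*C₁^2, by positivity, 1, one_pos, ?_⟩
  intro lam hlam s hs ψ w Pe hψ hw hPe
  -- basic positivity facts
  have hlam0 : (0:ℝ) < lam := by linarith
  have hsE : Real.exp (2*lam*M) ≤ s := by
    have h1 : (1:ℝ) * (T + Real.exp (2*lam*M)) = T + Real.exp (2*lam*M) := one_mul _
    linarith [hs, h1.le]
  have hE1 : (1:ℝ) ≤ Real.exp (2*lam*M) := Real.one_le_exp (by positivity)
  have hs1 : (1:ℝ) ≤ s := le_trans hE1 hsE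
  have hs0 : (0:ℝ) < s := by linarith
  -- η bounds on the compact
  have hηle : ∀ x ∈ Set.Icc (0:ℝ) L, ∀ t ∈ Set.Icc (0:ℝ) T, η x t ≤ M := by
    intro x hx t ht; exact hM.2 (Set.mem_image2_of_mem hx ht)
  have hηge : ∀ x ∈ Set.Icc (0:ℝ) L, ∀ t ∈ Set.Icc (0:ℝ) T, 0 ≤ η x t := by
    intro x hx t ht
    have := hmin.2 (Set.mem_image2_of_mem hx ht)
    nlinarith
  -- derivatives of ψ
  set ψ1 : ℝ × ℝ → ℝ := fun p => fderiv ℝ (Function.uncurry ψ) p (1, 0) with hψ1def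
  have hψ1s : ContDiff ℝ (⊤ : ℕ∞) ψ1 := (hψ.fderiv_right (by simp)).clm_apply contDiff_const
  set ψ2 : ℝ × ℝ → ℝ := fun p => fderiv ℝ ψ1 p (1, 0) with hψ2def
  have hψ2s : ContDiff ℝ (⊤ : ℕ∞) ψ2 := (hψ1s.fderiv_right (by simp)).clm_apply contDiff_const
  -- slice derivatives
  have hθd : ∀ x t : ℝ, HasDerivAt (fun y => η y t) (θ1 (x,t)) x := by
    intro x t
    have := aux_sliceX (g := Function.uncurry η) ((hη.differentiable (by simp)) (x,t))
    simpa [Function.uncurry] using this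
  have hθtd : ∀ x t : ℝ, HasDerivAt (fun u => η x u) (θt (x,t)) t := by
    intro x t
    have := aux_sliceT (g := Function.uncurry η) ((hη.differentiable (by simp)) (x,t))
    simpa [Function.uncurry] using this
  have hθ1d : ∀ x t : ℝ, HasDerivAt (fun y => θ1 (y,t)) (θ2 (x,t)) x := by
    intro x t
    exact aux_sliceX (g := θ1) ((hθ1s.differentiable (by simp)) (x,t))
  have hψd : ∀ x t : ℝ, HasDerivAt (fun y => ψ y t) (ψ1 (x,t)) x := by
    intro x t
    have := aux_sliceX (g := Function.uncurry ψ) ((hψ.differentiable (by simp)) (x,t))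
    simpa [Function.uncurry] using this
  have hψ1d : ∀ x t : ℝ, HasDerivAt (fun y => ψ1 (y,t)) (ψ2 (x,t)) x := by
    intro x t
    exact aux_sliceX (g := ψ1) ((hψ1s.differentiable (by simp)) (x,t))
  -- derivative of x-slices of wAl
  have hβ : ∀ x t : ℝ, HasDerivAt (fun y => wAl r η M lam y t)
      (r t * -(Real.exp (lam * η x t) * (lam * θ1 (x,t)))) x := by
    intro x t
    have h2 : HasDerivAt (fun y => Real.exp (2*lam*M) - Real.exp (lam * η y t))
        (-(Real.exp (lam * η x t) * (lam * θ1 (x,t)))) x :=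
      (((hθd x t).const_mul lam).exp).const_sub _
    have h3 := h2.const_mul (r t)
    have h4 : (fun y => wAl r η M lam y t)
        = fun y => r t * (Real.exp (2*lam*M) - Real.exp (lam * η y t)) := by
      funext y; simp [wAl]
    rw [h4]; exact h3
  -- first and second x-derivatives of w
  set P0 : ℝ → ℝ → ℝ := fun x t => s * (r t * (lam * (θ1 (x,t) * Real.exp (lam * η x t)))) with hP0def
  set R0 : ℝ → ℝ → ℝ := fun x t => s * (r t * (lam * (θ2 (x,t) * Real.exp (lam * η x t)
      + θ1 (x,t) * (Real.exp (lam * η x t) * (lam * θ1 (x,t)))))) with hR0def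
  set w1 : ℝ → ℝ → ℝ := fun x t => Real.exp (-(s * wAl r η M lam x t))
      * (P0 x t * ψ x t + ψ1 (x,t)) with hw1def
  set W2 : ℝ → ℝ → ℝ := fun x t => Real.exp (-(s * wAl r η M lam x t))
      * (P0 x t * (P0 x t * ψ x t + ψ1 (x,t))
        + (R0 x t * ψ x t + P0 x t * ψ1 (x,t) + ψ2 (x,t))) with hW2def
  have hExd : ∀ x t : ℝ, HasDerivAt (fun y => Real.exp (-(s * wAl r η M lam y t)))
      (Real.exp (-(s * wAl r η M lam x t)) * -(s * (r t * -(Real.exp (lam * η x t) * (lam * θ1 (x,t)))))) x := by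
    intro x t
    exact (((hβ x t).const_mul s).neg).exp
  have hw1d : ∀ x t : ℝ, HasDerivAt (fun y => w y t) (w1 x t) x := by
    intro x t
    rw [hw]
    have h := (hExd x t).mul (hψd x t)
    convert h using 1
    · rfl
    · rfl
    · rfl
    simp only [hw1def, hP0def]
    ring
  have hpdXw : ∀ x t : ℝ, pdX w x t = w1 x t := fun x t => (hw1d x t).deriv
  have hw2d : ∀ x t : ℝ, HasDerivAt (fun y => w1 y t) (W2 x t) x := by
    intro x t
    have hP0d : HasDerivAt (fun y => P0 y t) (R0 x t) x := by
      have h1 := ((hθ1d x t).mul (((hθd x t).const_mul lam).exp))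
      have h2 := (h1.const_mul lam).const_mul (r t)
      have h3 := h2.const_mul s
      exact h3
    have hG : HasDerivAt (fun y => P0 y t * ψ y t + ψ1 (y,t))
        (R0 x t * ψ x t + P0 x t * ψ1 (x,t) + ψ2 (x,t)) x := by
      have := (hP0d.mul (hψd x t)).add (hψ1d x t)
      convert this using 1
      · rfl
      · rfl
      · rfl
      all_goals try ring
    have h := (hExd x t).mul hG
    convert h using 1
    · rfl
    · rfl
    · rfl
    all_goals try simp only [hW2def]
    all_goals try ring
  have hpdXX : ∀ x t : ℝ, pdX (pdX w) x t = W2 x t := by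
    intro x t
    have h1 : (fun y => pdX w y t) = fun y => w1 y t := funext fun y => hpdXw y t
    show deriv (fun y => pdX w y t) x = W2 x t
    rw [h1]
    exact (hw2d x t).deriv
  -- first derivatives of wAl
  have hαx : ∀ x t : ℝ, pdX (wAl r η M lam) x t
      = r t * -(Real.exp (lam * η x t) * (lam * θ1 (x,t))) := by
    intro x t
    exact (hβ x t).deriv
  have hαt : ∀ x : ℝ, ∀ t ∈ Set.Ioo (0:ℝ) T, pdT (wAl r η M lam) x t
      = deriv r t * (Real.exp (2*lam*M) - Real.exp (lam * η x t))
        + r t * -(Real.exp (lam * η x t) * (lam * θt (x,t))) := by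
    intro x t ht
    have hrda : HasDerivAt r (deriv r t) t :=
      ((hr_smooth.contDiffAt (isOpen_Ioo.mem_nhds ht)).differentiableAt (by simp)).hasDerivAt
    have h2 : HasDerivAt (fun u => Real.exp (2*lam*M) - Real.exp (lam * η x u))
        (-(Real.exp (lam * η x t) * (lam * θt (x,t)))) t :=
      (((hθtd x t).const_mul lam).exp).const_sub _
    have h3 := hrda.mul h2
    have h4 : (fun u => wAl r η M lam x u)
        = fun u => r u * (Real.exp (2*lam*M) - Real.exp (lam * η x u)) := by
      funext u; simp [wAl]
    show deriv (fun u => wAl r η M lam x u) t = _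
    rw [h4]; exact h3.deriv
  -- pointwise bound on the potential Q
  have hQb : ∀ t ∈ Set.Ioo (0:ℝ) T, ∀ x ∈ Set.Icc (0:ℝ) L,
      |s * pdT (wAl r η M lam) x t + s^2 * (pdX (wAl r η M lam) x t)^2|
        ≤ C₁ * (s^2 * lam^2 * (wXi r η lam x t)^2) := by
    intro t ht x hx
    have htI : t ∈ Set.Icc (0:ℝ) T := ⟨le_of_lt ht.1, le_of_lt ht.2⟩
    have hrt1 : 1 ≤ r t := hr1 t ht
    have he1 : 1 ≤ Real.exp (lam * η x t) :=
      Real.one_le_exp (mul_nonneg (le_of_lt hlam0) (hηge x hx t htI))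
    have heM : Real.exp (lam * η x t) ≤ Real.exp (lam * M) :=
      Real.exp_le_exp.mpr (mul_le_mul_of_nonneg_left (hηle x hx t htI) (le_of_lt hlam0))
    have heE : Real.exp (lam * M) ≤ Real.exp (2*lam*M) := Real.exp_le_exp.mpr
      (by have h0 : 0 ≤ lam*M := mul_nonneg (le_of_lt hlam0) (le_of_lt hMpos); linarith)
    have hdr : |deriv r t| ≤ C_r * (r t)^2 := hrd t ht
    have hbt : |θt (x,t)| ≤ Kθ := hbθt x hx t htI
    have hb1 : |θ1 (x,t)| ≤ Kθ := hbθ1 x hx t htI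
    rw [hαt x t ht, hαx x t]
    have hξeq : wXi r η lam x t = r t * Real.exp (lam * η x t) := rfl
    rw [hξeq]
    set e := Real.exp (lam * η x t) with hedef
    set ρ := r t with hρdef
    set dr := deriv r t with hdrdef
    set E2 := Real.exp (2*lam*M) with hE2def
    have he0 : 0 ≤ e := le_trans zero_le_one he1
    have hρ0 : 0 ≤ ρ := le_trans zero_le_one hrt1
    have hlam0' : 0 ≤ lam := le_of_lt hlam0
    have hs0' : 0 ≤ s := le_of_lt hs0
    have hEe : 0 ≤ E2 - e := by linarith
    have hEes : E2 - e ≤ s := by linarith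
    have hKθ0 : 0 ≤ Kθ := by linarith
    have habs2 : |ρ * -(e * (lam * θt (x,t)))| ≤ ρ * (e * (lam * Kθ)) := by
      rw [abs_mul, abs_neg, abs_mul, abs_mul, abs_of_nonneg hρ0, abs_of_nonneg he0,
        abs_of_nonneg hlam0']
      have h1 : lam * |θt (x,t)| ≤ lam * Kθ := mul_le_mul_of_nonneg_left hbt hlam0'
      have h2 : e * (lam * |θt (x,t)|) ≤ e * (lam * Kθ) := mul_le_mul_of_nonneg_left h1 he0
      exact mul_le_mul_of_nonneg_left h2 hρ0
    have habs1 : |dr * (E2 - e)| ≤ (C_r * ρ^2) * (E2 - e) := by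
      rw [abs_mul, abs_of_nonneg hEe]
      exact mul_le_mul_of_nonneg_right hdr hEe
    have habs3 : |ρ * -(e * (lam * θ1 (x,t)))| ≤ ρ * (e * (lam * Kθ)) := by
      rw [abs_mul, abs_neg, abs_mul, abs_mul, abs_of_nonneg hρ0, abs_of_nonneg he0,
        abs_of_nonneg hlam0']
      have h1 : lam * |θ1 (x,t)| ≤ lam * Kθ := mul_le_mul_of_nonneg_left hb1 hlam0'
      have h2 : e * (lam * |θ1 (x,t)|) ≤ e * (lam * Kθ) := mul_le_mul_of_nonneg_left h1 he0
      exact mul_le_mul_of_nonneg_left h2 hρ0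
    have hsq3 : (ρ * -(e * (lam * θ1 (x,t))))^2 ≤ (ρ * (e * (lam * Kθ)))^2 := by
      rw [← sq_abs (ρ * -(e * (lam * θ1 (x,t))))]
      exact pow_le_pow_left₀ (abs_nonneg _) habs3 2
    have htri : |s * (dr * (E2 - e) + ρ * -(e * (lam * θt (x,t)))) + s^2 * (ρ * -(e * (lam * θ1 (x,t))))^2|
        ≤ s * ((C_r * ρ^2) * (E2 - e) + ρ * (e * (lam * Kθ))) + s^2 * (ρ * (e * (lam * Kθ)))^2 := by
      have h0 : 0 ≤ s^2 * (ρ * -(e * (lam * θ1 (x,t))))^2 := by positivity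
      calc |s * (dr * (E2 - e) + ρ * -(e * (lam * θt (x,t)))) + s^2 * (ρ * -(e * (lam * θ1 (x,t))))^2|
          ≤ |s * (dr * (E2 - e) + ρ * -(e * (lam * θt (x,t))))| + |s^2 * (ρ * -(e * (lam * θ1 (x,t))))^2| :=
            abs_add_le _ _
        _ = s * |dr * (E2 - e) + ρ * -(e * (lam * θt (x,t)))| + s^2 * (ρ * -(e * (lam * θ1 (x,t))))^2 := by
            rw [abs_mul, abs_of_nonneg hs0', abs_of_nonneg h0]
        _ ≤ s * ((C_r * ρ^2) * (E2 - e) + ρ * (e * (lam * Kθ))) + s^2 * (ρ * (e * (lam * Kθ)))^2 := by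
            have h1 : |dr * (E2 - e) + ρ * -(e * (lam * θt (x,t)))|
                ≤ (C_r * ρ^2) * (E2 - e) + ρ * (e * (lam * Kθ)) :=
              le_trans (abs_add_le _ _) (add_le_add habs1 habs2)
            have h2 := mul_le_mul_of_nonneg_left h1 hs0'
            have h3 := mul_le_mul_of_nonneg_left hsq3 (sq_nonneg s)
            linarith
    refine le_trans htri ?_
    rw [hC₁def]
    exact aux_Qarith hC_r1 hKθ1 hs1 hlam hrt1 he1 hEes hEe
  -- the pointwise inequality between the three integrands
  have hpt : ∀ t ∈ Set.Ioo (0:ℝ) T, ∀ x ∈ Set.Icc (0:ℝ) L,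
      (wXi r η lam x t)⁻¹ * (pdX (pdX w) x t)^2
        ≤ 2 * ((wXi r η lam x t)⁻¹ * (Pe x t)^2)
          + (2*C₁^2*(s^4*lam^4)) * ((wXi r η lam x t)^3 * (w x t)^2) := by
    intro t ht x hx
    have hQ := hQb t ht x hx
    set ξv := wXi r η lam x t with hξvdef
    have hξv : 0 < ξv := mul_pos (hr_pos t ht) (Real.exp_pos _)
    set Qv := s * pdT (wAl r η M lam) x t + s^2 * (pdX (wAl r η M lam) x t)^2 with hQvdef
    have hPee : pdX (pdX w) x t = Pe x t - Qv * w x t := by rw [hPe]; ring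
    rw [hPee]
    have hsq : (Pe x t - Qv * w x t)^2 ≤ 2*(Pe x t)^2 + 2*Qv^2*(w x t)^2 := by
      have := aux_sq_split (Pe x t) (Qv * w x t)
      calc (Pe x t - Qv * w x t)^2 ≤ 2*(Pe x t)^2 + 2*(Qv * w x t)^2 := this
        _ = 2*(Pe x t)^2 + 2*Qv^2*(w x t)^2 := by ring
    have hQ2 : Qv^2 ≤ C₁^2*(s^4*lam^4)*ξv^4 := by
      rw [← sq_abs Qv]
      have h2 := pow_le_pow_left₀ (abs_nonneg _) hQ 2
      calc |Qv|^2 ≤ (C₁ * (s^2 * lam^2 * ξv^2))^2 := h2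
        _ = C₁^2*(s^4*lam^4)*ξv^4 := by ring
    have hinv : 0 < ξv⁻¹ := inv_pos.mpr hξv
    have hne : ξv ≠ 0 := ne_of_gt hξv
    have hcanc : ξv⁻¹*ξv^4 = ξv^3 := by
      calc ξv⁻¹*ξv^4 = ξv^3*(ξv*ξv⁻¹) := by ring
        _ = ξv^3 := by rw [mul_inv_cancel₀ hne, mul_one]
    calc ξv⁻¹ * (Pe x t - Qv*w x t)^2
        ≤ ξv⁻¹ * (2*(Pe x t)^2 + 2*Qv^2*(w x t)^2) :=
          mul_le_mul_of_nonneg_left hsq (le_of_lt hinv)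
      _ = 2*(ξv⁻¹*(Pe x t)^2) + 2*(ξv⁻¹*Qv^2)*(w x t)^2 := by ring
      _ ≤ 2*(ξv⁻¹*(Pe x t)^2) + 2*(ξv⁻¹*(C₁^2*(s^4*lam^4)*ξv^4))*(w x t)^2 := by
          have h5 : ξv⁻¹*Qv^2 ≤ ξv⁻¹*(C₁^2*(s^4*lam^4)*ξv^4) :=
            mul_le_mul_of_nonneg_left hQ2 (le_of_lt hinv)
          have h6 : 2*(ξv⁻¹*Qv^2) ≤ 2*(ξv⁻¹*(C₁^2*(s^4*lam^4)*ξv^4)) := by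
            exact mul_le_mul_of_nonneg_left h5 (by norm_num)
          exact add_le_add le_rfl (mul_le_mul_of_nonneg_right h6 (sq_nonneg (w x t)))
      _ = 2*(ξv⁻¹*(Pe x t)^2) + (2*C₁^2*(s^4*lam^4))*((ξv⁻¹*ξv^4)*(w x t)^2) := by ring
      _ = 2*(ξv⁻¹*(Pe x t)^2) + (2*C₁^2*(s^4*lam^4))*(ξv^3*(w x t)^2) := by rw [hcanc]
  -- uniform bounds for the three integrands
  obtain ⟨Kp1, hKp1⟩ := hQcomp.exists_bound_of_continuousOn hψ.continuous.continuousOn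
  obtain ⟨Kp2, hKp2⟩ := hQcomp.exists_bound_of_continuousOn hψ1s.continuous.continuousOn
  obtain ⟨Kp3, hKp3⟩ := hQcomp.exists_bound_of_continuousOn hψ2s.continuous.continuousOn
  set Kp : ℝ := max 1 (max Kp1 (max Kp2 Kp3)) with hKpdef
  have hKp1' : 1 ≤ Kp := le_max_left _ _
  have hKp0 : 0 ≤ Kp := by linarith
  have hbψ : ∀ x ∈ Set.Icc (0:ℝ) L, ∀ t ∈ Set.Icc (0:ℝ) T, |ψ x t| ≤ Kp := by
    intro x hx t ht
    calc |ψ x t| ≤ Kp1 := by have := hKp1 (x,t) ⟨hx, ht⟩; rwa [Real.norm_eq_abs] at this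
      _ ≤ Kp := le_trans (le_max_left _ _) (le_max_right _ _)
  have hbψ1 : ∀ x ∈ Set.Icc (0:ℝ) L, ∀ t ∈ Set.Icc (0:ℝ) T, |ψ1 (x,t)| ≤ Kp := by
    intro x hx t ht
    calc |ψ1 (x,t)| ≤ Kp2 := by have := hKp2 (x,t) ⟨hx, ht⟩; rwa [Real.norm_eq_abs] at this
      _ ≤ Kp := le_trans (le_trans (le_max_left _ _) (le_max_right _ _)) (le_max_right _ _)
  have hbψ2 : ∀ x ∈ Set.Icc (0:ℝ) L, ∀ t ∈ Set.Icc (0:ℝ) T, |ψ2 (x,t)| ≤ Kp := by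
    intro x hx t ht
    calc |ψ2 (x,t)| ≤ Kp3 := by have := hKp3 (x,t) ⟨hx, ht⟩; rwa [Real.norm_eq_abs] at this
      _ ≤ Kp := le_trans (le_trans (le_max_right _ _) (le_max_right _ _)) (le_max_right _ _)
  set eM : ℝ := Real.exp (lam * M) with heMdef
  have heM0 : 0 ≤ eM := Real.exp_nonneg _
  set c₀ : ℝ := Real.exp (2*lam*M) - eM with hc₀def
  have hc₀ : 0 < c₀ := by
    rw [hc₀def, heMdef, sub_pos]
    exact Real.exp_lt_exp.mpr (by nlinarith)
  obtain ⟨Cp, hCp0, hCp⟩ := aux_polyexp (ε := 2*(s*c₀)) (by positivity)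
  set cP : ℝ := s*(lam*(Kθ*eM)) with hcPdef
  have hcP0 : 0 ≤ cP := by
    apply mul_nonneg (le_of_lt hs0) (mul_nonneg (le_of_lt hlam0) (mul_nonneg (by linarith) heM0))
  set cR : ℝ := s*(lam*(Kθ*eM + Kθ*(eM*(lam*Kθ)))) with hcRdef
  have hcR0 : 0 ≤ cR := by
    apply mul_nonneg (le_of_lt hs0) (mul_nonneg (le_of_lt hlam0) ?_)
    have h1 : 0 ≤ Kθ := by linarith
    exact add_nonneg (mul_nonneg h1 heM0)
      (mul_nonneg h1 (mul_nonneg heM0 (mul_nonneg (le_of_lt hlam0) h1)))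
  set CW : ℝ := cP*(cP*Kp + Kp) + (cR*Kp + (cP*Kp + Kp)) with hCWdef
  set CF2 : ℝ := CW + C₁*(s^2*(lam^2*eM^2))*Kp with hCF2def
  have hbds : ∀ t ∈ Set.Ioo (0:ℝ) T, ∀ x ∈ Set.Icc (0:ℝ) L,
      (wXi r η lam x t)⁻¹ * (pdX (pdX w) x t)^2 ≤ CW^2*Cp
      ∧ (wXi r η lam x t)⁻¹ * (Pe x t)^2 ≤ CF2^2*Cp
      ∧ (wXi r η lam x t)^3 * (w x t)^2 ≤ eM^3*Kp^2*Cp := by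
    intro t ht x hx
    have htI : t ∈ Set.Icc (0:ℝ) T := ⟨le_of_lt ht.1, le_of_lt ht.2⟩
    have hrt1 : 1 ≤ r t := hr1 t ht
    have hρ0 : 0 ≤ r t := by linarith
    have he1 : 1 ≤ Real.exp (lam * η x t) :=
      Real.one_le_exp (mul_nonneg (le_of_lt hlam0) (hηge x hx t htI))
    have he0 : 0 ≤ Real.exp (lam * η x t) := Real.exp_nonneg _
    have heMb : Real.exp (lam * η x t) ≤ eM :=
      Real.exp_le_exp.mpr (mul_le_mul_of_nonneg_left (hηle x hx t htI) (le_of_lt hlam0))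
    have hs0' : 0 ≤ s := le_of_lt hs0
    have hlam0' : 0 ≤ lam := le_of_lt hlam0
    have hKθ0 : 0 ≤ Kθ := by linarith
    have hξv : 0 < wXi r η lam x t := mul_pos (hr_pos t ht) (Real.exp_pos _)
    have hξ1 : 1 ≤ wXi r η lam x t := by
      have : (1:ℝ)*1 ≤ r t * Real.exp (lam * η x t) :=
        mul_le_mul hrt1 he1 zero_le_one hρ0
      simpa [wXi] using this
    -- decay bound
    have hwAlge : c₀ * r t ≤ wAl r η M lam x t := by
      have h1 : c₀ ≤ Real.exp (2*lam*M) - Real.exp (lam * η x t) := by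
        rw [hc₀def]; linarith
      calc c₀ * r t = r t * c₀ := by ring
        _ ≤ r t * (Real.exp (2*lam*M) - Real.exp (lam * η x t)) :=
          mul_le_mul_of_nonneg_left h1 hρ0
        _ = wAl r η M lam x t := rfl
    have hEx : Real.exp (-(s * wAl r η M lam x t)) ≤ Real.exp (-(s * (c₀ * r t))) :=
      Real.exp_le_exp.mpr (by
        have := mul_le_mul_of_nonneg_left hwAlge hs0'
        linarith)
    set X : ℝ := Real.exp (-(s * (c₀ * r t))) with hXdef
    have hX0 : 0 ≤ X := Real.exp_nonneg _
    have hXρ : (r t)^4 * X^2 ≤ Cp := by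
      have hX2 : X^2 = Real.exp (-(2*(s*c₀) * r t)) := by
        rw [hXdef, sq, ← Real.exp_add]; congr 1; ring
      rw [hX2]; exact hCp (r t) hρ0
    -- bounds on P0, R0
    have hb1 : |θ1 (x,t)| ≤ Kθ := hbθ1 x hx t htI
    have hb2 : |θ2 (x,t)| ≤ Kθ := hbθ2 x hx t htI
    have hψb : |ψ x t| ≤ Kp := hbψ x hx t htI
    have hψ1b : |ψ1 (x,t)| ≤ Kp := hbψ1 x hx t htI
    have hψ2b : |ψ2 (x,t)| ≤ Kp := hbψ2 x hx t htI
    have hP0b : |P0 x t| ≤ r t * cP := by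
      have h1 : |P0 x t| = s * (r t * (lam * (|θ1 (x,t)| * Real.exp (lam * η x t)))) := by
        simp only [hP0def, abs_mul, abs_of_nonneg hs0', abs_of_nonneg hρ0,
          abs_of_nonneg hlam0', abs_of_nonneg he0]
      rw [h1]
      have h2 : |θ1 (x,t)| * Real.exp (lam * η x t) ≤ Kθ * eM :=
        mul_le_mul hb1 heMb he0 hKθ0
      calc s * (r t * (lam * (|θ1 (x,t)| * Real.exp (lam * η x t))))
          ≤ s * (r t * (lam * (Kθ * eM))) := by
            apply mul_le_mul_of_nonneg_left _ hs0'
            apply mul_le_mul_of_nonneg_left _ hρ0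
            exact mul_le_mul_of_nonneg_left h2 hlam0'
        _ = r t * cP := by rw [hcPdef]; ring
    have hR0b : |R0 x t| ≤ r t * cR := by
      have hin : |θ2 (x,t) * Real.exp (lam * η x t)
          + θ1 (x,t) * (Real.exp (lam * η x t) * (lam * θ1 (x,t)))|
          ≤ Kθ*eM + Kθ*(eM*(lam*Kθ)) := by
        have ht1 : |θ2 (x,t) * Real.exp (lam * η x t)| ≤ Kθ * eM := by
          rw [abs_mul, abs_of_nonneg he0]; exact mul_le_mul hb2 heMb he0 hKθ0
        have ht2 : |θ1 (x,t) * (Real.exp (lam * η x t) * (lam * θ1 (x,t)))|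
            ≤ Kθ*(eM*(lam*Kθ)) := by
          rw [abs_mul, abs_mul, abs_mul, abs_of_nonneg he0, abs_of_nonneg hlam0']
          have h3 : lam * |θ1 (x,t)| ≤ lam * Kθ := mul_le_mul_of_nonneg_left hb1 hlam0'
          have h4 : Real.exp (lam * η x t) * (lam * |θ1 (x,t)|) ≤ eM * (lam * Kθ) :=
            mul_le_mul heMb h3 (mul_nonneg hlam0' (abs_nonneg _)) heM0
          exact mul_le_mul hb1 h4 (mul_nonneg he0 (mul_nonneg hlam0' (abs_nonneg _))) hKθ0
        exact le_trans (abs_add_le _ _) (add_le_add ht1 ht2)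
      have h1 : |R0 x t| = s * (r t * (lam * |θ2 (x,t) * Real.exp (lam * η x t)
          + θ1 (x,t) * (Real.exp (lam * η x t) * (lam * θ1 (x,t)))|)) := by
        simp only [hR0def, abs_mul, abs_of_nonneg hs0', abs_of_nonneg hρ0,
          abs_of_nonneg hlam0']
      rw [h1]
      calc s * (r t * (lam * |θ2 (x,t) * Real.exp (lam * η x t)
          + θ1 (x,t) * (Real.exp (lam * η x t) * (lam * θ1 (x,t)))|))
          ≤ s * (r t * (lam * (Kθ*eM + Kθ*(eM*(lam*Kθ))))) := by
            apply mul_le_mul_of_nonneg_left _ hs0'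
            apply mul_le_mul_of_nonneg_left _ hρ0
            exact mul_le_mul_of_nonneg_left hin hlam0'
        _ = r t * cR := by rw [hcRdef]; ring
    -- bound on w
    have hwb : |w x t| ≤ X * Kp := by
      rw [hw]
      have h1 : |Real.exp (-(s * wAl r η M lam x t)) * ψ x t|
          = Real.exp (-(s * wAl r η M lam x t)) * |ψ x t| := by
        rw [abs_mul, abs_of_nonneg (Real.exp_nonneg _)]
      rw [h1]
      exact mul_le_mul hEx hψb (abs_nonneg _) hX0
    -- bound on W2
    have hW2b : |W2 x t| ≤ X * (CW * (r t)^2) := by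
      have hS : |P0 x t * (P0 x t * ψ x t + ψ1 (x,t))
          + (R0 x t * ψ x t + P0 x t * ψ1 (x,t) + ψ2 (x,t))| ≤ CW * (r t)^2 := by
        have hA : |P0 x t * (P0 x t * ψ x t + ψ1 (x,t))|
            ≤ (r t * cP) * ((r t * cP) * Kp + Kp) := by
          rw [abs_mul]
          have h2 : |P0 x t * ψ x t + ψ1 (x,t)| ≤ (r t * cP) * Kp + Kp := by
            refine le_trans (abs_add_le _ _) (add_le_add ?_ hψ1b)
            rw [abs_mul]
            exact mul_le_mul hP0b hψb (abs_nonneg _) (mul_nonneg hρ0 hcP0)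
          exact mul_le_mul hP0b h2 (abs_nonneg _) (mul_nonneg hρ0 hcP0)
        have hB : |R0 x t * ψ x t + P0 x t * ψ1 (x,t) + ψ2 (x,t)|
            ≤ (r t * cR) * Kp + ((r t * cP) * Kp + Kp) := by
          refine le_trans (abs_add_le _ _) ?_
          have h3 : |R0 x t * ψ x t + P0 x t * ψ1 (x,t)| ≤ (r t * cR)*Kp + (r t * cP)*Kp := by
            refine le_trans (abs_add_le _ _) (add_le_add ?_ ?_)
            · rw [abs_mul]; exact mul_le_mul hR0b hψb (abs_nonneg _) (mul_nonneg hρ0 hcR0)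
            · rw [abs_mul]; exact mul_le_mul hP0b hψ1b (abs_nonneg _) (mul_nonneg hρ0 hcP0)
          have := add_le_add h3 hψ2b
          linarith
        have h5 := le_trans (abs_add_le _ _) (add_le_add hA hB)
        refine le_trans h5 ?_
        have h6 := aux_poly2 (ρ := r t) (cP := cP) (cR := cR) (Kp := Kp) hrt1 hcP0 hcR0 hKp0
        calc (r t * cP) * ((r t * cP) * Kp + Kp)
              + ((r t * cR) * Kp + ((r t * cP) * Kp + Kp))
            ≤ (cP*(cP*Kp + Kp) + (cR*Kp + (cP*Kp + Kp))) * (r t)^2 := h6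
          _ = CW * (r t)^2 := by rw [hCWdef]
      have h7 : |W2 x t| = Real.exp (-(s * wAl r η M lam x t))
          * |P0 x t * (P0 x t * ψ x t + ψ1 (x,t))
            + (R0 x t * ψ x t + P0 x t * ψ1 (x,t) + ψ2 (x,t))| := by
        simp only [hW2def, abs_mul, abs_of_nonneg (Real.exp_nonneg _)]
      rw [h7]
      exact mul_le_mul hEx hS (abs_nonneg _) hX0
    -- Pe bound
    have hQw : |s * pdT (wAl r η M lam) x t + s^2 * (pdX (wAl r η M lam) x t)^2|
        ≤ C₁*(s^2*(lam^2*eM^2))*(r t)^2 := by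
      refine le_trans (hQb t ht x hx) ?_
      have hξle : wXi r η lam x t ≤ r t * eM := mul_le_mul_of_nonneg_left heMb hρ0
      have h2 : (wXi r η lam x t)^2 ≤ (r t * eM)^2 :=
        pow_le_pow_left₀ hξv.le hξle 2
      calc C₁ * (s^2 * lam^2 * (wXi r η lam x t)^2)
          ≤ C₁ * (s^2 * lam^2 * (r t * eM)^2) := by
            apply mul_le_mul_of_nonneg_left _ (le_of_lt hC₁pos)
            exact mul_le_mul_of_nonneg_left h2 (by positivity)
        _ = C₁*(s^2*(lam^2*eM^2))*(r t)^2 := by ring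
    have hPeb : |Pe x t| ≤ X * (CF2 * (r t)^2) := by
      have h1 : Pe x t = W2 x t + (s * pdT (wAl r η M lam) x t
          + s^2 * (pdX (wAl r η M lam) x t)^2) * w x t := by
        simp only [hPe]
        rw [hpdXX x t]
      rw [h1]
      refine le_trans (abs_add_le _ _) ?_
      have h2 : |(s * pdT (wAl r η M lam) x t + s^2 * (pdX (wAl r η M lam) x t)^2) * w x t|
          ≤ (C₁*(s^2*(lam^2*eM^2))*(r t)^2) * (X*Kp) := by
        rw [abs_mul]
        refine mul_le_mul hQw hwb (abs_nonneg _) ?_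
        exact mul_nonneg (mul_nonneg (le_of_lt hC₁pos) (by positivity)) (sq_nonneg _)
      calc |W2 x t| + |(s * pdT (wAl r η M lam) x t
            + s^2 * (pdX (wAl r η M lam) x t)^2) * w x t|
          ≤ X*(CW*(r t)^2) + (C₁*(s^2*(lam^2*eM^2))*(r t)^2)*(X*Kp) := add_le_add hW2b h2
        _ = X * (CF2 * (r t)^2) := by rw [hCF2def]; ring
    refine ⟨?_, ?_, ?_⟩
    · have h1 : (pdX (pdX w) x t)^2 ≤ CW^2 * Cp := by
        rw [hpdXX x t, ← sq_abs (W2 x t)]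
        calc |W2 x t|^2 ≤ (X*(CW*(r t)^2))^2 := pow_le_pow_left₀ (abs_nonneg _) hW2b 2
          _ = CW^2 * ((r t)^4 * X^2) := by ring
          _ ≤ CW^2 * Cp := mul_le_mul_of_nonneg_left hXρ (sq_nonneg CW)
      calc (wXi r η lam x t)⁻¹ * (pdX (pdX w) x t)^2
          ≤ 1 * (CW^2*Cp) := mul_le_mul (aux_invle hξ1) h1 (sq_nonneg _) zero_le_one
        _ = CW^2*Cp := one_mul _
    · have h1 : (Pe x t)^2 ≤ CF2^2 * Cp := by
        rw [← sq_abs (Pe x t)]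
        calc |Pe x t|^2 ≤ (X*(CF2*(r t)^2))^2 := pow_le_pow_left₀ (abs_nonneg _) hPeb 2
          _ = CF2^2 * ((r t)^4 * X^2) := by ring
          _ ≤ CF2^2 * Cp := mul_le_mul_of_nonneg_left hXρ (sq_nonneg CF2)
      calc (wXi r η lam x t)⁻¹ * (Pe x t)^2
          ≤ 1 * (CF2^2*Cp) := mul_le_mul (aux_invle hξ1) h1 (sq_nonneg _) zero_le_one
        _ = CF2^2*Cp := one_mul _
    · have hξle : wXi r η lam x t ≤ r t * eM := mul_le_mul_of_nonneg_left heMb hρ0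
      have h1 : (wXi r η lam x t)^3 ≤ (r t * eM)^3 := pow_le_pow_left₀ hξv.le hξle 3
      have h2 : (w x t)^2 ≤ (X*Kp)^2 := by
        rw [← sq_abs (w x t)]; exact pow_le_pow_left₀ (abs_nonneg _) hwb 2
      have h3 : (r t)^3 * X^2 ≤ (r t)^4 * X^2 := by
        apply mul_le_mul_of_nonneg_right _ (sq_nonneg X)
        exact pow_le_pow_right₀ hrt1 (by norm_num)
      have h4 : 0 ≤ eM^3*Kp^2 := mul_nonneg (pow_nonneg heM0 3) (sq_nonneg Kp)
      calc (wXi r η lam x t)^3 * (w x t)^2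
          ≤ (r t * eM)^3 * (X*Kp)^2 :=
            mul_le_mul h1 h2 (sq_nonneg _) (pow_nonneg (mul_nonneg hρ0 heM0) 3)
        _ = eM^3*Kp^2*((r t)^3 * X^2) := by ring
        _ ≤ eM^3*Kp^2*((r t)^4 * X^2) := mul_le_mul_of_nonneg_left h3 h4
        _ ≤ eM^3*Kp^2*Cp := mul_le_mul_of_nonneg_left hXρ h4
  -- continuity of the integrands on the rectangle (t,x) ∈ Ioo 0 T × Ioo 0 L
  set rect : Set (ℝ × ℝ) := Set.Ioo (0:ℝ) T ×ˢ Set.Ioo (0:ℝ) L with hrectdef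
  have hswap : Continuous (fun p : ℝ×ℝ => ((p.2, p.1) : ℝ×ℝ)) :=
    continuous_snd.prodMk continuous_fst
  have hrc : ContinuousOn (fun p : ℝ×ℝ => r p.1) rect :=
    hr_smooth.continuousOn.comp continuous_fst.continuousOn (fun p hp => hp.1)
  have hdrc : ContinuousOn (fun p : ℝ×ℝ => deriv r p.1) rect :=
    (hr_smooth.continuousOn_deriv_of_isOpen isOpen_Ioo (by simp)).comp
      continuous_fst.continuousOn (fun p hp => hp.1)
  have hηc : Continuous (fun p : ℝ×ℝ => η p.2 p.1) := hη.continuous.comp hswap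
  have hec : Continuous (fun p : ℝ×ℝ => Real.exp (lam * η p.2 p.1)) :=
    Real.continuous_exp.comp (continuous_const.mul hηc)
  have hθ1c : Continuous (fun p : ℝ×ℝ => θ1 (p.2, p.1)) := hθ1s.continuous.comp hswap
  have hθtc : Continuous (fun p : ℝ×ℝ => θt (p.2, p.1)) := hθts.continuous.comp hswap
  have hθ2c : Continuous (fun p : ℝ×ℝ => θ2 (p.2, p.1)) := hθ2s.continuous.comp hswap
  have hψc : Continuous (fun p : ℝ×ℝ => ψ p.2 p.1) := hψ.continuous.comp hswap
  have hψ1c : Continuous (fun p : ℝ×ℝ => ψ1 (p.2, p.1)) := hψ1s.continuous.comp hswap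
  have hψ2c : Continuous (fun p : ℝ×ℝ => ψ2 (p.2, p.1)) := hψ2s.continuous.comp hswap
  have hwAlc : ContinuousOn (fun p : ℝ×ℝ => wAl r η M lam p.2 p.1) rect := by
    have h4 : (fun p : ℝ×ℝ => wAl r η M lam p.2 p.1)
        = fun p => r p.1 * (Real.exp (2*lam*M) - Real.exp (lam * η p.2 p.1)) := by
      funext p; simp [wAl]
    rw [h4]; exact hrc.mul (continuous_const.sub hec).continuousOn
  have hExc : ContinuousOn (fun p : ℝ×ℝ => Real.exp (-(s * wAl r η M lam p.2 p.1))) rect :=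
    Real.continuous_exp.comp_continuousOn ((continuousOn_const.mul hwAlc).neg)
  have hP0c : ContinuousOn (fun p : ℝ×ℝ => P0 p.2 p.1) rect := by
    simp only [hP0def]
    exact continuousOn_const.mul (hrc.mul
      (continuous_const.mul (hθ1c.mul hec)).continuousOn)
  have hR0c : ContinuousOn (fun p : ℝ×ℝ => R0 p.2 p.1) rect := by
    simp only [hR0def]
    exact continuousOn_const.mul (hrc.mul (continuous_const.mul
      ((hθ2c.mul hec).add (hθ1c.mul (hec.mul (continuous_const.mul hθ1c))))).continuousOn)
  have hw_c : ContinuousOn (fun p : ℝ×ℝ => w p.2 p.1) rect := by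
    have h4 : (fun p : ℝ×ℝ => w p.2 p.1)
        = fun p => Real.exp (-(s * wAl r η M lam p.2 p.1)) * ψ p.2 p.1 := by
      funext p; rw [hw]
    rw [h4]; exact hExc.mul hψc.continuousOn
  have hW2c : ContinuousOn (fun p : ℝ×ℝ => W2 p.2 p.1) rect := by
    simp only [hW2def]
    exact hExc.mul ((hP0c.mul ((hP0c.mul hψc.continuousOn).add hψ1c.continuousOn)).add
      (((hR0c.mul hψc.continuousOn).add (hP0c.mul hψ1c.continuousOn)).add hψ2c.continuousOn))
  have hξc : ContinuousOn (fun p : ℝ×ℝ => wXi r η lam p.2 p.1) rect := by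
    have h4 : (fun p : ℝ×ℝ => wXi r η lam p.2 p.1)
        = fun p => r p.1 * Real.exp (lam * η p.2 p.1) := rfl
    rw [h4]; exact hrc.mul hec.continuousOn
  have hξne : ∀ p ∈ rect, wXi r η lam p.2 p.1 ≠ 0 := fun p hp =>
    ne_of_gt (mul_pos (hr_pos _ hp.1) (Real.exp_pos _))
  have hF1c : ContinuousOn (fun p : ℝ×ℝ => (wXi r η lam p.2 p.1)⁻¹
      * (pdX (pdX w) p.2 p.1)^2) rect := by
    have h4 : (fun p : ℝ×ℝ => (wXi r η lam p.2 p.1)⁻¹ * (pdX (pdX w) p.2 p.1)^2)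
        = fun p => (wXi r η lam p.2 p.1)⁻¹ * (W2 p.2 p.1)^2 := by
      funext p; rw [hpdXX]
    rw [h4]; exact (hξc.inv₀ hξne).mul (hW2c.pow 2)
  have hF2c : ContinuousOn (fun p : ℝ×ℝ => (wXi r η lam p.2 p.1)⁻¹
      * (Pe p.2 p.1)^2) rect := by
    have hgc : ContinuousOn (fun p : ℝ×ℝ => (wXi r η lam p.2 p.1)⁻¹
        * ((W2 p.2 p.1 + (s * (deriv r p.1 * (Real.exp (2*lam*M) - Real.exp (lam * η p.2 p.1))
            + r p.1 * -(Real.exp (lam * η p.2 p.1) * (lam * θt (p.2,p.1))))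
          + s^2 * (r p.1 * -(Real.exp (lam * η p.2 p.1) * (lam * θ1 (p.2,p.1))))^2) * w p.2 p.1))^2)
        rect := by
      refine (hξc.inv₀ hξne).mul (ContinuousOn.pow ?_ 2)
      refine hW2c.add (ContinuousOn.mul ?_ hw_c)
      refine ContinuousOn.add ?_ ?_
      · refine continuousOn_const.mul (ContinuousOn.add ?_ ?_)
        · exact hdrc.mul (continuous_const.sub hec).continuousOn
        · exact hrc.mul ((hec.mul (continuous_const.mul hθtc)).neg).continuousOn
      · exact continuousOn_const.mul
          ((hrc.mul ((hec.mul (continuous_const.mul hθ1c)).neg).continuousOn).pow 2)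
    refine hgc.congr ?_
    intro p hp
    simp only [hPe]
    rw [hpdXX, hαt p.2 p.1 hp.1, hαx]
  have hF3c : ContinuousOn (fun p : ℝ×ℝ => (wXi r η lam p.2 p.1)^3 * (w p.2 p.1)^2) rect :=
    (hξc.pow 3).mul (hw_c.pow 2)
  -- integrability over the product
  set μT := volume.restrict (Set.Ioo (0:ℝ) T) with hμTdef
  set μL := volume.restrict (Set.Ioo (0:ℝ) L) with hμLdef
  haveI hfinT : IsFiniteMeasure μT := by
    constructor; rw [hμTdef, Measure.restrict_apply_univ]
    simp [Real.volume_Ioo]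
  haveI hfinL : IsFiniteMeasure μL := by
    constructor; rw [hμLdef, Measure.restrict_apply_univ]
    simp [Real.volume_Ioo]
  have hrectm : MeasurableSet rect := measurableSet_Ioo.prod measurableSet_Ioo
  have hprodeq : μT.prod μL = (volume.prod volume).restrict rect := by
    rw [hμTdef, hμLdef, hrectdef]; exact Measure.prod_restrict _ _
  have hinteg : ∀ G : ℝ×ℝ → ℝ, ContinuousOn G rect → (∀ p ∈ rect, 0 ≤ G p) →
      ∀ Cb : ℝ, (∀ p ∈ rect, G p ≤ Cb) → Integrable G (μT.prod μL) := by
    intro G hGc hG0 Cb hGb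
    have hGm : AEStronglyMeasurable G (μT.prod μL) := by
      rw [hprodeq]; exact hGc.aestronglyMeasurable hrectm
    refine Integrable.mono' (integrable_const Cb) hGm ?_
    rw [hprodeq]
    filter_upwards [ae_restrict_mem hrectm] with p hp
    rw [Real.norm_eq_abs, abs_of_nonneg (hG0 p hp)]
    exact hGb p hp
  have hF1i : Integrable (fun p : ℝ×ℝ => (wXi r η lam p.2 p.1)⁻¹
      * (pdX (pdX w) p.2 p.1)^2) (μT.prod μL) := by
    refine hinteg _ hF1c (fun p hp => ?_) (CW^2*Cp) (fun p hp => ?_)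
    · exact mul_nonneg (inv_nonneg.mpr (le_of_lt (mul_pos (hr_pos _ hp.1)
        (Real.exp_pos _)))) (sq_nonneg _)
    · exact ((hbds p.1 hp.1 p.2 (Set.Ioo_subset_Icc_self hp.2)).1)
  have hF2i : Integrable (fun p : ℝ×ℝ => (wXi r η lam p.2 p.1)⁻¹
      * (Pe p.2 p.1)^2) (μT.prod μL) := by
    refine hinteg _ hF2c (fun p hp => ?_) (CF2^2*Cp) (fun p hp => ?_)
    · exact mul_nonneg (inv_nonneg.mpr (le_of_lt (mul_pos (hr_pos _ hp.1)
        (Real.exp_pos _)))) (sq_nonneg _)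
    · exact ((hbds p.1 hp.1 p.2 (Set.Ioo_subset_Icc_self hp.2)).2.1)
  have hF3i : Integrable (fun p : ℝ×ℝ => (wXi r η lam p.2 p.1)^3
      * (w p.2 p.1)^2) (μT.prod μL) := by
    refine hinteg _ hF3c (fun p hp => ?_) (eM^3*Kp^2*Cp) (fun p hp => ?_)
    · exact mul_nonneg (pow_nonneg (le_of_lt (mul_pos (hr_pos _ hp.1)
        (Real.exp_pos _))) 3) (sq_nonneg _)
    · exact ((hbds p.1 hp.1 p.2 (Set.Ioo_subset_Icc_self hp.2)).2.2)
  have hB : Integrable (fun t => ∫ x, (wXi r η lam x t)⁻¹ * (Pe x t)^2 ∂μL) μT :=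
    hF2i.integral_prod_left
  have hD : Integrable (fun t => ∫ x, (wXi r η lam x t)^3 * (w x t)^2 ∂μL) μT :=
    hF3i.integral_prod_left
  have haememT : ∀ᵐ t ∂μT, t ∈ Set.Ioo (0:ℝ) T := by
    rw [hμTdef]; exact ae_restrict_mem measurableSet_Ioo
  have haememL : ∀ᵐ x ∂μL, x ∈ Set.Ioo (0:ℝ) L := by
    rw [hμLdef]; exact ae_restrict_mem measurableSet_Ioo
  have hmain : (∫ t, (∫ x, (wXi r η lam x t)⁻¹ * (pdX (pdX w) x t)^2 ∂μL) ∂μT)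
      ≤ ∫ t, (2*(∫ x, (wXi r η lam x t)⁻¹ * (Pe x t)^2 ∂μL)
        + (2*C₁^2*(s^4*lam^4))*(∫ x, (wXi r η lam x t)^3 * (w x t)^2 ∂μL)) ∂μT := by
    apply integral_mono_of_nonneg
    · filter_upwards [haememT] with t ht
      apply integral_nonneg_of_ae
      filter_upwards [haememL] with x hx
      exact mul_nonneg (inv_nonneg.mpr (mul_pos (hr_pos t ht) (Real.exp_pos _)).le)
        (sq_nonneg _)
    · exact (hB.const_mul 2).add (hD.const_mul _)
    · filter_upwards [haememT, hF1i.prod_right_ae, hF2i.prod_right_ae, hF3i.prod_right_ae]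
        with t ht h1 h2 h3
      have step : (∫ x, (wXi r η lam x t)⁻¹ * (pdX (pdX w) x t)^2 ∂μL)
          ≤ ∫ x, (2*((wXi r η lam x t)⁻¹ * (Pe x t)^2)
            + (2*C₁^2*(s^4*lam^4))*((wXi r η lam x t)^3 * (w x t)^2)) ∂μL := by
        apply integral_mono_of_nonneg
        · filter_upwards [haememL] with x hx
          exact mul_nonneg (inv_nonneg.mpr (mul_pos (hr_pos t ht) (Real.exp_pos _)).le)
            (sq_nonneg _)
        · exact (h2.const_mul 2).add (h3.const_mul _)
        · filter_upwards [haememL] with x hx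
          exact hpt t ht x (Set.Ioo_subset_Icc_self hx)
      refine le_trans step (le_of_eq ?_)
      rw [integral_add (h2.const_mul 2) (h3.const_mul _), integral_const_mul, integral_const_mul]
  have hsum : (∫ t, (2*(∫ x, (wXi r η lam x t)⁻¹ * (Pe x t)^2 ∂μL)
        + (2*C₁^2*(s^4*lam^4))*(∫ x, (wXi r η lam x t)^3 * (w x t)^2 ∂μL)) ∂μT)
      = 2*(∫ t, (∫ x, (wXi r η lam x t)⁻¹ * (Pe x t)^2 ∂μL) ∂μT)
        + (2*C₁^2*(s^4*lam^4))*(∫ t, (∫ x, (wXi r η lam x t)^3 * (w x t)^2 ∂μL) ∂μT) := by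
    rw [integral_add (hB.const_mul 2) (hD.const_mul _), integral_const_mul, integral_const_mul]
  have hIB : 0 ≤ ∫ t, (∫ x, (wXi r η lam x t)⁻¹ * (Pe x t)^2 ∂μL) ∂μT := by
    apply integral_nonneg_of_ae
    filter_upwards [haememT] with t ht
    apply integral_nonneg_of_ae
    filter_upwards [haememL] with x hx
    exact mul_nonneg (inv_nonneg.mpr (mul_pos (hr_pos t ht) (Real.exp_pos _)).le) (sq_nonneg _)
  have hID : 0 ≤ ∫ t, (∫ x, (wXi r η lam x t)^3 * (w x t)^2 ∂μL) ∂μT := by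
    apply integral_nonneg_of_ae
    filter_upwards [haememT] with t ht
    apply integral_nonneg_of_ae
    filter_upwards [haememL] with x hx
    exact mul_nonneg (pow_nonneg (mul_pos (hr_pos t ht) (Real.exp_pos _)).le 3) (sq_nonneg _)
  have hfin := hmain.trans (le_of_eq hsum)
  have hsinv : (0:ℝ) ≤ s⁻¹ := inv_nonneg.mpr hs0.le
  have hss : s⁻¹*s^4 = s^3 := by
    calc s⁻¹*s^4 = s^3*(s*s⁻¹) := by ring
      _ = s^3 := by rw [mul_inv_cancel₀ (ne_of_gt hs0), mul_one]
  have hX : 0 ≤ s⁻¹*(∫ t, (∫ x, (wXi r η lam x t)⁻¹ * (Pe x t)^2 ∂μL) ∂μT) :=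
    mul_nonneg hsinv hIB
  have hY : 0 ≤ s^3*lam^4*(∫ t, (∫ x, (wXi r η lam x t)^3 * (w x t)^2 ∂μL) ∂μT) :=
    mul_nonneg (mul_nonneg (pow_nonneg hs0.le 3) (pow_nonneg hlam0.le 4)) hID
  calc s⁻¹ * (∫ t, (∫ x, (wXi r η lam x t)⁻¹ * (pdX (pdX w) x t)^2 ∂μL) ∂μT)
      ≤ s⁻¹ * (2*(∫ t, (∫ x, (wXi r η lam x t)⁻¹ * (Pe x t)^2 ∂μL) ∂μT)
        + (2*C₁^2*(s^4*lam^4))*(∫ t, (∫ x, (wXi r η lam x t)^3 * (w x t)^2 ∂μL) ∂μT)) :=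
        mul_le_mul_of_nonneg_left hfin hsinv
    _ = 2*(s⁻¹*(∫ t, (∫ x, (wXi r η lam x t)⁻¹ * (Pe x t)^2 ∂μL) ∂μT))
        + 2*C₁^2*((s⁻¹*s^4)*(lam^4*(∫ t, (∫ x, (wXi r η lam x t)^3 * (w x t)^2 ∂μL) ∂μT))) := by
        ring
    _ = 2*(s⁻¹*(∫ t, (∫ x, (wXi r η lam x t)⁻¹ * (Pe x t)^2 ∂μL) ∂μT))
        + 2*C₁^2*(s^3*lam^4*(∫ t, (∫ x, (wXi r η lam x t)^3 * (w x t)^2 ∂μL) ∂μT)) := by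
        rw [hss]; ring
    _ ≤ (2 + 2*C₁^2)*(s⁻¹*(∫ t, (∫ x, (wXi r η lam x t)⁻¹ * (Pe x t)^2 ∂μL) ∂μT)
        + s^3*lam^4*(∫ t, (∫ x, (wXi r η lam x t)^3 * (w x t)^2 ∂μL) ∂μT)) :=
        aux_final hX hY
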